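/- Let α, β, τ be natural numbers with τ ≥ 1, let p = (α+1)/(α+β+2), p_W = (α+2)/(α+β+3), p_L = (α+1)/(α+β+3) be rationals, and let q be a rational with p_W > q > p_L. Then p * (1 + p_W * (τ-1)) + (1-p) * (q * (τ-1)) ≥ p * τ, with strict inequality when τ ≥ 2. -/

import Mathlib

/-!
The posterior mean is a martingale: `p * p_W + (1 - p) * p_L = p`. Hence the gain of the
expanded Q-value over `p * τ` factors as `(τ - 1) * ((1 - p) * (q - p_L))`: the first factor is
nonnegative, and positive once `τ ≥ 2`, the second is positive since `p < 1`, and the third since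
`q > p_L`.
-/

section

variable {K : Type*}

theorem lookahead_value_sub_eq [CommRing K] {p pW pL q t : K}
    (hmart : p * pW + (1 - p) * pL = p) :
    p * (1 + pW * (t - 1)) + (1 - p) * (q * (t - 1)) - p * t
      = (t - 1) * ((1 - p) * (q - pL)) := by
  linear_combination (t - 1) * hmart

variable [Field K] [LinearOrder K] [IsStrictOrderedRing K] {a b : K}

theorem posterior_mean_martingale (ha : 0 ≤ a) (hb : 0 ≤ b) :
    (a + 1) / (a + b + 2) * ((a + 2) / (a + b + 3))
        + (1 - (a + 1) / (a + b + 2)) * ((a + 1) / (a + b + 3))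
      = (a + 1) / (a + b + 2) := by
  have h2 : a + b + 2 ≠ 0 := by positivity
  have h3 : a + b + 3 ≠ 0 := by positivity
  field_simp
  ring

theorem posterior_mean_lt_one (ha : 0 ≤ a) (hb : 0 ≤ b) : (a + 1) / (a + b + 2) < 1 :=
  (div_lt_one (by positivity)).2 (by linarith)

end

theorem stmt_1_general (α β τ : ℕ) (hτ : 1 ≤ τ) (q : ℚ)
    (h1 : ((α:ℚ)+1)/((α:ℚ)+β+3) < q) :
    (((α:ℚ)+1)/((α:ℚ)+β+2)) * (1 + (((α:ℚ)+2)/((α:ℚ)+β+3)) * ((τ:ℚ)-1))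
        + (1 - ((α:ℚ)+1)/((α:ℚ)+β+2)) * (q * ((τ:ℚ)-1))
      ≥ (((α:ℚ)+1)/((α:ℚ)+β+2)) * (τ:ℚ)
    ∧ (2 ≤ τ →
      (((α:ℚ)+1)/((α:ℚ)+β+2)) * (1 + (((α:ℚ)+2)/((α:ℚ)+β+3)) * ((τ:ℚ)-1))
        + (1 - ((α:ℚ)+1)/((α:ℚ)+β+2)) * (q * ((τ:ℚ)-1))
      > (((α:ℚ)+1)/((α:ℚ)+β+2)) * (τ:ℚ)) := by
  have ha : (0:ℚ) ≤ α := α.cast_nonneg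
  have hb : (0:ℚ) ≤ β := β.cast_nonneg
  have hgain := lookahead_value_sub_eq (q := q) (t := (τ:ℚ)) (posterior_mean_martingale ha hb)
  have hloss_pos : 0 < (1 - ((α:ℚ)+1)/((α:ℚ)+β+2)) * (q - ((α:ℚ)+1)/((α:ℚ)+β+3)) :=
    mul_pos (sub_pos.2 (posterior_mean_lt_one ha hb)) (sub_pos.2 h1)
  constructor
  · have hτ' : (0:ℚ) ≤ τ - 1 := sub_nonneg.2 (by exact_mod_cast hτ)
    exact sub_nonneg.1 (hgain ▸ mul_nonneg hτ' hloss_pos.le)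
  · intro h2τ
    have hτ' : (0:ℚ) < τ - 1 := sub_pos.2 (by exact_mod_cast h2τ)
    exact sub_pos.1 (hgain ▸ mul_pos hτ' hloss_pos)

theorem stmt_1 (α β τ : ℕ) (hτ : 1 ≤ τ) (q : ℚ)
    (h1 : ((α:ℚ)+1)/((α:ℚ)+β+3) < q) (h2 : q < ((α:ℚ)+2)/((α:ℚ)+β+3)) :
    (((α:ℚ)+1)/((α:ℚ)+β+2)) * (1 + (((α:ℚ)+2)/((α:ℚ)+β+3)) * ((τ:ℚ)-1))
        + (1 - ((α:ℚ)+1)/((α:ℚ)+β+2)) * (q * ((τ:ℚ)-1))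
      ≥ (((α:ℚ)+1)/((α:ℚ)+β+2)) * (τ:ℚ)
    ∧ (2 ≤ τ →
      (((α:ℚ)+1)/((α:ℚ)+β+2)) * (1 + (((α:ℚ)+2)/((α:ℚ)+β+3)) * ((τ:ℚ)-1))
        + (1 - ((α:ℚ)+1)/((α:ℚ)+β+2)) * (q * ((τ:ℚ)-1))
      > (((α:ℚ)+1)/((α:ℚ)+β+2)) * (τ:ℚ)) :=
  stmt_1_general α β τ hτ q h1
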